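/- Fix α ∈ ℝ, δ > 0, ε > 0, n ∈ ℕ and a Borel probability measure P on Ω. Then the map ω ↦ M(α,δ,n,ε,ω) is measurable with respect to the P-completion of the Borel σ-algebra of Ω. -/

import Mathlib

open Set Filter Topology MeasureTheory ENNReal NNReal

noncomputable section

namespace Paper

variable {Ω M : Type*} [MetricSpace Ω] [MetricSpace M]

/-- Fiber forward iterates `F_ω^n = F_{θ^{n-1}ω} ∘ ⋯ ∘ F_ω`. -/
def fIter (θ : Ω → Ω) (F : Ω → M → M) (ω : Ω) : ℕ → M → M
  | 0 => id
  | n + 1 => F (θ^[n] ω) ∘ fIter θ F ω n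

/-- Fiber Bowen metric `d_ω^n`. -/
def dBowen (θ : Ω → Ω) (F : Ω → M → M) (ω : Ω) (n : ℕ) (x y : M) : ℝ :=
  ((Finset.range n).sup fun i => nndist (fIter θ F ω i x) (fIter θ F ω i y) : ℝ≥0)

/-- The skew product `Θ(ω,x) = (θω, F_ω x)`. -/
def skew (θ : Ω → Ω) (F : Ω → M → M) : Ω × M → Ω × M :=
  fun p => (θ p.1, F p.1 p.2)

/-- The deviation set `P(α,δ,n,ω)` of points whose Birkhoff average up to time `n`
is `δ`-close to `α`. -/
def Pdev (θ : Ω → Ω) (F : Ω → M → M) (φ : Ω × M → ℝ) (α δ : ℝ) (n : ℕ) (ω : Ω) :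
    Set M :=
  {x | |(∑ i ∈ Finset.range n, φ ((skew θ F)^[i] (ω, x))) / (n : ℝ) - α| < δ}

/-- `M(α,δ,n,ε,ω)`: the largest cardinality of an `(ω,ε,n)`-separated subset of
`P(α,δ,n,ω)`, with the convention that it is `1` when `P(α,δ,n,ω) = ∅`. -/
def sepMax (θ : Ω → Ω) (F : Ω → M → M) (φ : Ω × M → ℝ) (α δ : ℝ) (n : ℕ) (ε : ℝ)
    (ω : Ω) : ℕ :=
  max 1 (sSup {k : ℕ | ∃ E : Finset M, (↑E : Set M) ⊆ Pdev θ F φ α δ n ω ∧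
    (∀ x ∈ E, ∀ y ∈ E, x ≠ y → ε < dBowen θ F ω n x y) ∧ E.card = k})

/-! The cardinalities of `(ω,ε,n)`-separated subsets of `P(α,δ,n,ω)` form a lower set of `ℕ`.
Both conditions defining a separated subset are strict inequalities between quantities that
depend continuously on `ω`, so a set witnessing `k` at `ω₀` still witnesses it near `ω₀`: the
set of `ω` where `k` is attained is open. The supremum of a lower set of `ℕ` is read off
countably many such membership conditions, also when the set is all of `ℕ` and `sSup` takes
the junk value `0`; hence `ω ↦ M(α,δ,n,ε,ω)` is even Borel measurable. -/

theorem Nat.bddAbove_iff_exists_notMem_of_isLowerSet {S : Set ℕ} (hS : IsLowerSet S) :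
    BddAbove S ↔ ∃ j, j ∉ S :=
  ⟨fun ⟨m, hm⟩ => ⟨m + 1, fun h => by simpa using hm h⟩,
    fun ⟨j, hj⟩ => ⟨j, fun s hs => (not_le.1 fun hjs => hj (hS hjs hs)).le⟩⟩

theorem Nat.lt_sSup_iff_of_isLowerSet {S : Set ℕ} (hS : IsLowerSet S) (k : ℕ) :
    k < sSup S ↔ k + 1 ∈ S ∧ ∃ j, j ∉ S := by
  rw [← Nat.bddAbove_iff_exists_notMem_of_isLowerSet hS]
  by_cases hbdd : BddAbove S
  · rcases S.eq_empty_or_nonempty with rfl | hne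
    · simp
    rw [lt_csSup_iff hbdd hne]
    exact ⟨fun ⟨s, hs, hks⟩ => ⟨hS (Nat.succ_le_of_lt hks) hs, hbdd⟩,
      fun ⟨hk, _⟩ => ⟨k + 1, hk, k.lt_succ_self⟩⟩
  · simp only [Nat.sSup_of_not_bddAbove hbdd, hbdd]
    simp

theorem measurable_sSup_of_isLowerSet {X : Type*} [MeasurableSpace X] {S : X → Set ℕ}
    (hS : ∀ x, IsLowerSet (S x)) (hmeas : ∀ k, MeasurableSet {x | k ∈ S x}) :
    Measurable fun x => sSup (S x) := by
  refine measurable_of_Ioi fun k => ?_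
  have : (fun x => sSup (S x)) ⁻¹' Ioi k = {x | k + 1 ∈ S x} ∩ ⋃ j, {x | j ∈ S x}ᶜ := by
    ext x
    simp [Nat.lt_sSup_iff_of_isLowerSet (hS x)]
  rw [this]
  exact (hmeas _).inter (MeasurableSet.iUnion fun j => (hmeas j).compl)

section Continuity

variable (θ : Ω → Ω) (F : Ω → M → M) (hθ : Continuous θ)
  (hF : Continuous fun p : Ω × M => F p.1 p.2)
include hθ hF

theorem continuous_skew : Continuous (skew θ F) :=
  (hθ.comp continuous_fst).prodMk hF

theorem continuous_fIter (i : ℕ) : Continuous fun p : Ω × M => fIter θ F p.1 i p.2 := by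
  induction i with
  | zero => exact continuous_snd
  | succ i ih => exact hF.comp (((hθ.iterate i).comp continuous_fst).prodMk ih)

theorem continuous_dBowen (n : ℕ) :
    Continuous fun p : Ω × M × M => dBowen θ F p.1 n p.2.1 p.2.2 := by
  have hiter (i : ℕ) (g : Ω × M × M → M) (hg : Continuous g) :
      Continuous fun p : Ω × M × M => fIter θ F p.1 i (g p) :=
    (continuous_fIter θ F hθ hF i).comp (continuous_fst.prodMk hg)
  refine NNReal.continuous_coe.comp (Continuous.finset_sup_apply fun i _ => ?_)
  exact (hiter i _ (continuous_fst.comp continuous_snd)).nndist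
    (hiter i _ (continuous_snd.comp continuous_snd))

theorem isOpen_setOf_mem_Pdev (φ : Ω × M → ℝ) (hφ : Continuous φ) (α δ : ℝ) (n : ℕ) :
    IsOpen {p : Ω × M | p.2 ∈ Pdev θ F φ α δ n p.1} := by
  have hsum : Continuous fun p : Ω × M =>
      ∑ i ∈ Finset.range n, φ ((skew θ F)^[i] (p.1, p.2)) :=
    continuous_finsetSum _ fun i _ => hφ.comp ((continuous_skew θ F hθ hF).iterate i)
  exact isOpen_lt ((hsum.div_const _).sub continuous_const).abs continuous_const

end Continuity

def separatedCards (θ : Ω → Ω) (F : Ω → M → M) (φ : Ω × M → ℝ) (α δ : ℝ) (n : ℕ) (ε : ℝ)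
    (ω : Ω) : Set ℕ :=
  {k : ℕ | ∃ E : Finset M, (↑E : Set M) ⊆ Pdev θ F φ α δ n ω ∧
    (∀ x ∈ E, ∀ y ∈ E, x ≠ y → ε < dBowen θ F ω n x y) ∧ E.card = k}

omit [MetricSpace Ω] in
theorem isLowerSet_separatedCards (θ : Ω → Ω) (F : Ω → M → M) (φ : Ω × M → ℝ) (α δ : ℝ)
    (n : ℕ) (ε : ℝ) (ω : Ω) : IsLowerSet (separatedCards θ F φ α δ n ε ω) := by
  rintro k j hjk ⟨E, hEP, hEsep, rfl⟩
  obtain ⟨E', hE'E, rfl⟩ := Finset.exists_subset_card_eq hjk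
  exact ⟨E', (Finset.coe_subset.2 hE'E).trans hEP,
    fun x hx y hy => hEsep x (hE'E hx) y (hE'E hy), rfl⟩

theorem isOpen_setOf_mem_separatedCards (θ : Ω → Ω) (F : Ω → M → M) (hθ : Continuous θ)
    (hF : Continuous fun p : Ω × M => F p.1 p.2) (φ : Ω × M → ℝ) (hφ : Continuous φ)
    (α δ : ℝ) (n : ℕ) (ε : ℝ) (k : ℕ) :
    IsOpen {ω | k ∈ separatedCards θ F φ α δ n ε ω} := by
  have hmem (x : M) : IsOpen {ω | x ∈ Pdev θ F φ α δ n ω} :=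
    (isOpen_setOf_mem_Pdev θ F hθ hF φ hφ α δ n).preimage
      (continuous_id.prodMk continuous_const)
  have hsep (x y : M) : IsOpen {ω | ε < dBowen θ F ω n x y} :=
    isOpen_lt continuous_const ((continuous_dBowen θ F hθ hF n).comp
      (continuous_id.prodMk (continuous_const (y := (x, y)))))
  refine isOpen_iff_mem_nhds.2 fun ω₀ ⟨E, hEP, hEsep, hcard⟩ => ?_
  have hP : ∀ᶠ ω in 𝓝 ω₀, ∀ x ∈ E, x ∈ Pdev θ F φ α δ n ω :=
    (eventually_all_finset E).2 fun x hx => (hmem x).mem_nhds (hEP hx)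
  have hS : ∀ᶠ ω in 𝓝 ω₀, ∀ x ∈ E, ∀ y ∈ E, x ≠ y → ε < dBowen θ F ω n x y :=
    (eventually_all_finset E).2 fun x hx => (eventually_all_finset E).2 fun y hy =>
      eventually_imp_distrib_left.2 fun hxy => (hsep x y).mem_nhds (hEsep x hx y hy hxy)
  filter_upwards [hP, hS] with ω hωP hωS using ⟨E, hωP, hωS, hcard⟩

theorem sepMax_null_measurable_general
    [MeasurableSpace Ω] [BorelSpace Ω]
    (θ : Ω → Ω) (hθ : Continuous θ)
    (F : Ω → M → M) (hF : Continuous fun p : Ω × M => F p.1 p.2)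
    (φ : Ω × M → ℝ) (hφ : Continuous φ)
    (α δ ε : ℝ) (n : ℕ)
    (P : Measure Ω) :
    NullMeasurable (fun ω => sepMax θ F φ α δ n ε ω) P := by
  have hsSup : Measurable fun ω => sSup (separatedCards θ F φ α δ n ε ω) :=
    measurable_sSup_of_isLowerSet (isLowerSet_separatedCards θ F φ α δ n ε)
      fun k => (isOpen_setOf_mem_separatedCards θ F hθ hF φ hφ α δ n ε k).measurableSet
  exact (measurable_const.max hsSup).nullMeasurable

/-- for fixed `α, δ, ε, n` the map `ω ↦ M(α,δ,n,ε,ω)` is measurable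
with respect to the `P`-completion of the Borel σ-algebra of `Ω`. -/
theorem sepMax_null_measurable
    [CompactSpace Ω] [CompactSpace M]
    [MeasurableSpace Ω] [BorelSpace Ω] [MeasurableSpace M] [BorelSpace M]
    (θ : Ω → Ω) (hθ : Continuous θ)
    (F : Ω → M → M) (hF : Continuous fun p : Ω × M => F p.1 p.2)
    (φ : Ω × M → ℝ) (hφ : Continuous φ)
    (α δ ε : ℝ) (hδ : 0 < δ) (hε : 0 < ε) (n : ℕ)
    (P : Measure Ω) [IsProbabilityMeasure P] :
    NullMeasurable (fun ω => sepMax θ F φ α δ n ε ω) P :=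
  sepMax_null_measurable_general θ hθ F hF φ hφ α δ ε n P

end Paper
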